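/- arXiv:2309.13400 — 2 statements merged into one kernel-verified Lean document; each statement's English description precedes it below -/
import Mathlib

section
/- Let n ≥ 2 be a natural number, let c₁, c₂ be real constants, and let f : ℝ → ℝ be a twice-differentiable function satisfying the Laguerre eigenvalue equation d/dt[ t · f'(t) ] = −f(t) for all t. Define u(η,t) = f(t)·(c₁·log(tanh(η/2)) + c₂)^(1/n) (real power). Then for every η > 0 and every t ∈ ℝ with c₁·log(tanh(η/2)) + c₂ > 0, u satisfies the Laguerre-type nonlinear diffusion equation ∂/∂t[ t · ∂u/∂t (η,t) ] = (1/sinh η)·∂/∂η[ sinh η · ∂/∂η ( u(η,t)ⁿ ) ] − u(η,t). -/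
/-!
The profile `g η = c₁ log (tanh (η / 2)) + c₂` is radially harmonic on the hyperbolic plane:
`g' η = c₁ / sinh η`, so the flux `sinh η · g' η` is constant and `Δ_H g = 0`. Where `g > 0`
we have `uⁿ = f(t)ⁿ g(η)`, hence `Δ_H (uⁿ) = 0`; in `t`, `u` is `f` times a constant, so the
Laguerre equation gives `D_L u = -u`.
-/

open Real Filter Topology

theorem hasDerivAt_log_tanh_half {η : ℝ} (hη : 0 < η) :
    HasDerivAt (fun s => log (tanh (s / 2))) (sinh η)⁻¹ η := by
  have hsinh : 0 < sinh (η / 2) := sinh_pos_iff.2 (half_pos hη)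
  have hcosh : 0 < cosh (η / 2) := cosh_pos _
  have hhalf : HasDerivAt (fun s : ℝ => s / 2) (1 / 2) η := (hasDerivAt_id η).div_const 2
  have hquot := (((hasDerivAt_sinh _).comp η hhalf).div ((hasDerivAt_cosh _).comp η hhalf)
    hcosh.ne').log (div_pos hsinh hcosh).ne'
  simp only [Function.comp_def, Pi.div_apply, ← tanh_eq_sinh_div_cosh] at hquot
  convert hquot using 1
  rw [show η = 2 * (η / 2) by ring, sinh_two_mul, mul_div_cancel_left₀ _ two_ne_zero,
    tanh_eq_sinh_div_cosh]
  field_simp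
  linear_combination -cosh_sq_sub_sinh_sq (η / 2)

noncomputable def radialHarmonic (c₁ c₂ η : ℝ) : ℝ := c₁ * log (tanh (η / 2)) + c₂

theorem hasDerivAt_radialHarmonic (c₁ c₂ : ℝ) {η : ℝ} (hη : 0 < η) :
    HasDerivAt (radialHarmonic c₁ c₂) (c₁ / sinh η) η :=
  ((hasDerivAt_log_tanh_half hη).const_mul c₁).add_const c₂

theorem deriv_sinh_mul_deriv_eq_zero_of_eventuallyEq {φ : ℝ → ℝ} {a c₁ c₂ η : ℝ} (hη : 0 < η)
    (hφ : φ =ᶠ[𝓝 η] fun s => a * radialHarmonic c₁ c₂ s) :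
    deriv (fun s => sinh s * deriv φ s) η = 0 := by
  have hflux : (fun s => sinh s * deriv φ s) =ᶠ[𝓝 η] fun _ => a * c₁ := by
    filter_upwards [eventually_gt_nhds hη, hφ.eventuallyEq_nhds] with s hs hφs
    rw [hφs.deriv_eq, ((hasDerivAt_radialHarmonic c₁ c₂ hs).const_mul a).deriv]
    field_simp [(sinh_pos_iff.2 hs).ne']
  rw [hflux.deriv_eq, deriv_const]

theorem deriv_mul_deriv_mul_const (f : ℝ → ℝ) (C t : ℝ) :
    deriv (fun s => s * deriv (fun r => f r * C) s) t = deriv (fun s => s * deriv f s) t * C := by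
  simp only [deriv_mul_const_field, ← mul_assoc]

theorem stmt_6_general (n : ℕ) (hn : 2 ≤ n) (c₁ c₂ : ℝ) (f : ℝ → ℝ)
    (hlag : ∀ t : ℝ, deriv (fun s : ℝ => s * deriv f s) t = - f t)
    (u : ℝ → ℝ → ℝ)
    (hu : ∀ η t : ℝ, u η t =
      f t * (c₁ * Real.log (Real.tanh (η / 2)) + c₂) ^ ((1 : ℝ) / n)) :
    ∀ η t : ℝ, 0 < η → 0 < c₁ * Real.log (Real.tanh (η / 2)) + c₂ →
      deriv (fun s : ℝ => s * deriv (fun r : ℝ => u η r) s) t =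
        (1 / Real.sinh η) *
          deriv (fun s : ℝ => Real.sinh s * deriv (fun r : ℝ => (u r t) ^ n) s) η
        - u η t := by
  intro η t hη hg
  have hpos : ∀ᶠ s in 𝓝 η, 0 < radialHarmonic c₁ c₂ s :=
    (hasDerivAt_radialHarmonic c₁ c₂ hη).continuousAt.eventually (eventually_gt_nhds hg)
  have hpow : (fun r => u r t ^ n) =ᶠ[𝓝 η] fun r => f t ^ n * radialHarmonic c₁ c₂ r := by
    filter_upwards [hpos] with r hr
    rw [hu, mul_pow, one_div]
    exact congrArg _ (rpow_inv_natCast_pow hr.le (by omega))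
  rw [deriv_sinh_mul_deriv_eq_zero_of_eventuallyEq hη hpow, funext (hu η),
    deriv_mul_deriv_mul_const, hlag]
  ring

/-- If `f` is twice differentiable and satisfies the Laguerre eigenvalue
equation `(t f')' = -f`, then `u(η,t) = f(t)·(c₁ log(tanh(η/2)) + c₂)^(1/n)`
solves the Laguerre-type nonlinear diffusion equation
`∂_t(t ∂_t u) = Δ_H(uⁿ) - u` for `η > 0` where the radicand is positive. -/
theorem stmt_6 (n : ℕ) (hn : 2 ≤ n) (c₁ c₂ : ℝ) (f : ℝ → ℝ)
    (hf : Differentiable ℝ f) (hf' : Differentiable ℝ (deriv f))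
    (hlag : ∀ t : ℝ, deriv (fun s : ℝ => s * deriv f s) t = - f t)
    (u : ℝ → ℝ → ℝ)
    (hu : ∀ η t : ℝ, u η t =
      f t * (c₁ * Real.log (Real.tanh (η / 2)) + c₂) ^ ((1 : ℝ) / n)) :
    ∀ η t : ℝ, 0 < η → 0 < c₁ * Real.log (Real.tanh (η / 2)) + c₂ →
      deriv (fun s : ℝ => s * deriv (fun r : ℝ => u η r) s) t =
        (1 / Real.sinh η) *
          deriv (fun s : ℝ => Real.sinh s * deriv (fun r : ℝ => (u r t) ^ n) s) η
        - u η t :=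
  stmt_6_general n hn c₁ c₂ f hlag u hu
end

section
/- Let n ≥ 2 be a natural number, let ω, α be real constants with α ≠ 0, and let c₁, c₂ be real constants. Define the complex-valued function u(η,t) = exp(iωt/α) · (c₁·log(tanh(η/2)) + c₂)^(1/n) (real power of the real factor, multiplied by the complex exponential). Then for every η > 0 and every t ∈ ℝ with c₁·log(tanh(η/2)) + c₂ > 0, u satisfies the nonlinear equation ∂u/∂t (η,t) − (iω/α)·u(η,t) = (1/sinh η)·∂/∂η[ sinh η · ∂/∂η ( u(η,t)ⁿ ) ], where u(η,t)ⁿ denotes the n-th power of u taken before differentiating in η. In particular, this solution is completely periodic in time with separated variables. -/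
/-!
Both sides vanish. The time factor `exp(iωt/α)` is an eigenfunction of `∂ₜ` with eigenvalue
`iω/α`, so the left side is zero. On the right, `uⁿ = exp(inωt/α) · f(η)` with
`f = c₁ log tanh(η/2) + c₂`, and `f' = c₁ / sinh η`; hence `sinh η · ∂_η(uⁿ)` is locally constant
and `Δ_H(uⁿ) = 0`.
-/

open Real Filter Topology

theorem hasDerivAt_log_tanh_half_s7 {x : ℝ} (hx : x ≠ 0) :
    HasDerivAt (fun r => log (tanh (r / 2))) (1 / sinh x) x := by
  have hcosh : cosh (x / 2) ≠ 0 := (cosh_pos _).ne'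
  have hsinh : sinh (x / 2) ≠ 0 := by simpa [sinh_eq_zero] using hx
  have hhalf := (hasDerivAt_id' x).div_const 2
  have htanh := ((hasDerivAt_sinh _).comp x hhalf).div ((hasDerivAt_cosh _).comp x hhalf) hcosh
  simp_rw [tanh_eq_sinh_div_cosh]
  convert htanh.log (div_ne_zero hsinh hcosh) using 1
  · rfl
  · simp only [Function.comp_apply, Pi.div_apply]
    rw [show x = 2 * (x / 2) by ring, sinh_two_mul]
    field_simp
    linear_combination -cosh_sq_sub_sinh_sq (x / 2)

theorem deriv_sinh_mul_deriv_eq_zero {v : ℝ → ℂ} {c : ℂ} {η : ℝ} (hη : η ≠ 0)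
    (hv : ∀ᶠ s in 𝓝 η, HasDerivAt v (c / sinh s) s) :
    deriv (fun s => (sinh s : ℂ) * deriv v s) η = 0 := by
  have hconst : (fun s => (sinh s : ℂ) * deriv v s) =ᶠ[𝓝 η] fun _ => c := by
    filter_upwards [hv, eventually_ne_nhds hη] with s hs hs0
    have : (sinh s : ℂ) ≠ 0 := by exact_mod_cast sinh_ne_zero.mpr hs0
    rw [hs.deriv, mul_div_cancel₀ _ this]
  rw [hconst.deriv_eq, deriv_const]

theorem deriv_cexp_mul_div_mul (a b z : ℂ) (t : ℝ) :
    deriv (fun s : ℝ => Complex.exp (a * s / b) * z) t =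
      a / b * (Complex.exp (a * t / b) * z) := by
  have h := ((((hasDerivAt_id t).ofReal_comp).const_mul a).div_const b).cexp.mul_const z
  simp only [id, Complex.ofReal_one, mul_one] at h
  rw [h.deriv]
  ring

theorem mul_ofReal_rpow_one_div_pow (z : ℂ) {x : ℝ} (hx : 0 ≤ x) {n : ℕ} (hn : n ≠ 0) :
    (z * ((x ^ ((1 : ℝ) / n) : ℝ) : ℂ)) ^ n = z ^ n * x := by
  rw [mul_pow, ← Complex.ofReal_pow, one_div, rpow_inv_natCast_pow hx hn]

theorem stmt_7_general (n : ℕ) (hn : 2 ≤ n) (ω α : ℝ) (c₁ c₂ : ℝ)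
    (u : ℝ → ℝ → ℂ)
    (hu : ∀ η t : ℝ, u η t =
      Complex.exp (Complex.I * ω * t / α) *
        ((c₁ * Real.log (Real.tanh (η / 2)) + c₂) ^ ((1 : ℝ) / n) : ℝ)) :
    ∀ η t : ℝ, 0 < η → 0 < c₁ * Real.log (Real.tanh (η / 2)) + c₂ →
      deriv (fun s : ℝ => u η s) t - (Complex.I * ω / α) * u η t =
        (1 / (Real.sinh η : ℂ)) *
          deriv (fun s : ℝ => (Real.sinh s : ℂ) * deriv (fun r : ℝ => (u r t) ^ n) s) η := by
  intro η t hη hfη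
  set f : ℝ → ℝ := fun r => c₁ * log (tanh (r / 2)) + c₂
  have hf' : ∀ s ≠ 0, HasDerivAt f (c₁ / sinh s) s := fun s hs => by
    rw [← mul_one_div]
    exact ((hasDerivAt_log_tanh_half_s7 hs).const_mul c₁).add_const c₂
  set A := Complex.exp (Complex.I * ω * t / α) ^ n
  have hnear : ∀ᶠ s in 𝓝 η, s ≠ 0 ∧ 0 < f s :=
    (eventually_ne_nhds hη.ne').and ((hf' η hη.ne').continuousAt.eventually (lt_mem_nhds hfη))
  have hpow : ∀ᶠ s in 𝓝 η, HasDerivAt (fun r => u r t ^ n) (A * c₁ / sinh s) s := by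
    filter_upwards [eventually_eventually_nhds.mpr hnear] with s hs
    have heq : (fun r => u r t ^ n) =ᶠ[𝓝 s] fun r => A * (f r : ℂ) := by
      filter_upwards [hs] with r hr
      rw [hu, mul_ofReal_rpow_one_div_pow _ hr.2.le (by omega)]
    rw [mul_div_assoc, ← Complex.ofReal_div]
    exact (((hf' s hs.self_of_nhds.1).ofReal_comp).const_mul A).congr_of_eventuallyEq heq
  rw [deriv_sinh_mul_deriv_eq_zero hη.ne' hpow, mul_zero, sub_eq_zero]
  simp_rw [hu]
  exact deriv_cexp_mul_div_mul _ _ _ t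

/-- The completely periodic separated-variables function
`u(η,t) = exp(iωt/α)·(c₁ log(tanh(η/2)) + c₂)^(1/n)` solves the nonlinear
equation `∂ₜu - (iω/α)u = Δ_H(uⁿ)` for `η > 0` where the radicand is
positive. -/
theorem stmt_7 (n : ℕ) (hn : 2 ≤ n) (ω α : ℝ) (hα : α ≠ 0) (c₁ c₂ : ℝ)
    (u : ℝ → ℝ → ℂ)
    (hu : ∀ η t : ℝ, u η t =
      Complex.exp (Complex.I * ω * t / α) *
        ((c₁ * Real.log (Real.tanh (η / 2)) + c₂) ^ ((1 : ℝ) / n) : ℝ)) :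
    ∀ η t : ℝ, 0 < η → 0 < c₁ * Real.log (Real.tanh (η / 2)) + c₂ →
      deriv (fun s : ℝ => u η s) t - (Complex.I * ω / α) * u η t =
        (1 / (Real.sinh η : ℂ)) *
          deriv (fun s : ℝ => (Real.sinh s : ℂ) * deriv (fun r : ℝ => (u r t) ^ n) s) η :=
  stmt_7_general n hn ω α c₁ c₂ u hu
end
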